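/- Let a, b, c, d be positive integers (c ≥ 0 allowed) with ad - bc = l > 0, b > 0, a > 0. For positive reals x ≠ y such that all arguments lie in ℝ_{>0} \ {1}, the five-term relation implies: L((x+c/a)/(x+d/b)) - L((y+c/a)/(y+d/b)) + L(((ay+c)(bx+d))/((by+d)(ax+c))) ≡ L((bx+d)/(by+d)) - L((ax+c)/(ay+c)) mod π²/6. -/

import Mathlib

open Real

noncomputable def Li2 (x : ℝ) : ℝ := ∑' n : ℕ, x ^ (n + 1) / (n + 1) ^ 2

noncomputable def rogersL (x : ℝ) : ℝ :=
  if x < 1 then Li2 x + (1 / 2) * Real.log x * Real.log (1 - x)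
  else Real.pi ^ 2 / 3 - (Li2 (1 / x) + (1 / 2) * Real.log (1 / x) * Real.log (1 - 1 / x))

open Filter Set Topology

/-!
On `(0, 1)` the Rogers dilogarithm has derivative `-(log (1 - x) / x + log x / (1 - x)) / 2`.
Hence `L x + L (1 - x)` and Abel's combination
`L s + L t - L (s t) - L (s (1 - t) / (1 - s t)) - L (t (1 - s) / (1 - s t))` have zero derivative
in one variable, so they are constant; the constants are read off at `0⁺`, using `L (0⁺) = 0` and
`L (1⁻) = Li₂ 1 = π² / 6`. Together with the inversion `L x + L (1 / x) = π² / 3` this yields the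
five-term relation
`L u - L v + L (v / u) - L ((1 - v) / (1 - u)) + L (u (1 - v) / (v (1 - u))) = π² / 6`
for distinct `u, v ∈ (0, 1)`. The theorem is its instance `u = (x + c/a) / (x + d/b)`,
`v = (y + c/a) / (y + d/b)`, with `k = 1`: these lie in `(0, 1)` because `c/a < d/b`,
i.e. `ad - bc > 0`.
-/

lemma summable_one_div_nat_add_one_sq : Summable fun n : ℕ => 1 / ((n : ℝ) + 1) ^ 2 := by
  have h := (summable_nat_add_iff 1).mpr (Real.summable_one_div_nat_pow.mpr one_lt_two)
  exact h.congr fun n => by push_cast; ring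

lemma norm_pow_succ_div_sq_le {x : ℝ} (hx : |x| ≤ 1) (n : ℕ) :
    ‖x ^ (n + 1) / ((n : ℝ) + 1) ^ 2‖ ≤ 1 / ((n : ℝ) + 1) ^ 2 := by
  rw [norm_div, norm_pow, norm_of_nonneg (by positivity : (0 : ℝ) ≤ ((n : ℝ) + 1) ^ 2)]
  gcongr
  exact pow_le_one₀ (norm_nonneg x) hx

lemma continuousOn_Li2 : ContinuousOn Li2 (Icc (-1) 1) :=
  continuousOn_tsum (fun n => (continuous_pow (n + 1)).continuousOn.div_const _)
    summable_one_div_nat_add_one_sq fun n _ hx => norm_pow_succ_div_sq_le (abs_le.mpr hx) n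

lemma Li2_one : Li2 1 = π ^ 2 / 6 := by
  have h := (hasSum_nat_add_iff' 1).mpr hasSum_zeta_two
  simp only [Finset.range_one, Finset.sum_singleton, Nat.cast_zero] at h
  norm_num at h
  simpa [Li2] using h.tsum_eq

lemma hasDerivAt_Li2_of_abs_lt_one {x : ℝ} (hx : |x| < 1) :
    HasDerivAt Li2 (∑' n : ℕ, x ^ n / ((n : ℝ) + 1)) x := by
  obtain ⟨r, hxr, hr1⟩ := exists_between hx
  have hr0 : 0 < r := (abs_nonneg x).trans_lt hxr
  refine hasDerivAt_tsum_of_isPreconnected (g := fun (n : ℕ) y => y ^ (n + 1) / ((n : ℝ) + 1) ^ 2)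
    (g' := fun (n : ℕ) y => y ^ n / ((n : ℝ) + 1)) (summable_geometric_of_lt_one hr0.le hr1)
    isOpen_Ioo (convex_Ioo (-r) r).isPreconnected (fun n y _ => ?_) (fun n y hy => ?_)
    (y₀ := 0) ⟨neg_lt_zero.mpr hr0, hr0⟩ ?_ (abs_lt.mp hxr)
  · refine ((hasDerivAt_pow (n + 1) y).div_const (((n : ℝ) + 1) ^ 2)).congr_deriv ?_
    rw [Nat.add_sub_cancel]
    field_simp
    push_cast
    ring
  · rw [norm_div, norm_pow, norm_of_nonneg (by positivity : (0 : ℝ) ≤ (n : ℝ) + 1)]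
    calc ‖y‖ ^ n / ((n : ℝ) + 1) ≤ ‖y‖ ^ n := div_le_self (by positivity) (by simp)
      _ ≤ r ^ n := pow_le_pow_left₀ (norm_nonneg y) (abs_lt.mpr hy).le n
  · simp

lemma hasDerivAt_Li2 {x : ℝ} (hx : |x| < 1) (hx0 : x ≠ 0) :
    HasDerivAt Li2 (-log (1 - x) / x) x := by
  convert hasDerivAt_Li2_of_abs_lt_one hx using 1
  refine (((hasSum_pow_div_log_of_abs_lt_one hx).div_const x).congr_fun fun n => ?_).tsum_eq.symm
  field_simp
  ring

lemma tendsto_Li2_nhdsGT_zero : Tendsto Li2 (𝓝[>] 0) (𝓝 0) := by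
  have h := (hasDerivAt_Li2_of_abs_lt_one (x := 0) (by simp)).continuousAt.tendsto
  simpa [Li2] using h.mono_left nhdsWithin_le_nhds

lemma rogersL_of_lt_one {x : ℝ} (hx : x < 1) :
    rogersL x = Li2 x + 1 / 2 * log x * log (1 - x) :=
  if_pos hx

lemma rogersL_of_one_lt {x : ℝ} (hx : 1 < x) : rogersL x = π ^ 2 / 3 - rogersL (1 / x) := by
  rw [rogersL, if_neg hx.not_gt, rogersL_of_lt_one ((div_lt_one (one_pos.trans hx)).mpr hx)]

lemma hasDerivAt_rogersL {x : ℝ} (hx : x ∈ Ioo 0 1) :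
    HasDerivAt rogersL (-(log (1 - x) / x + log x / (1 - x)) / 2) x := by
  obtain ⟨hx0, hx1⟩ := hx
  have hlog : HasDerivAt (fun y => log (1 - y)) (-1 / (1 - x)) x := by
    simpa using ((hasDerivAt_id x).const_sub 1).log (sub_pos.mpr hx1).ne'
  have hsum := (hasDerivAt_Li2 (abs_lt.mpr ⟨by linarith, hx1⟩) hx0.ne').add
    (((hasDerivAt_log hx0.ne').const_mul (1 / 2 : ℝ)).mul hlog)
  have hev : (fun y => Li2 y + 1 / 2 * log y * log (1 - y)) =ᶠ[𝓝 x] rogersL :=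
    eventually_of_mem (Iio_mem_nhds hx1) fun y hy => (rogersL_of_lt_one hy).symm
  refine (hsum.congr_of_eventuallyEq hev.symm).congr_deriv ?_
  field_simp [(sub_pos.mpr hx1).ne']
  ring

lemma eqOn_of_hasDerivAt_zero_of_tendsto {f : ℝ → ℝ} {a b c : ℝ}
    (hf : ∀ x ∈ Ioo a b, HasDerivAt f 0 x) (hlim : Tendsto f (𝓝[>] a) (𝓝 c)) :
    EqOn f (fun _ => c) (Ioo a b) := by
  intro x hx
  obtain ⟨k, hk⟩ := isOpen_Ioo.exists_is_const_of_deriv_eq_zero isPreconnected_Ioo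
    (fun y hy => (hf y hy).differentiableAt.differentiableWithinAt) fun y hy => (hf y hy).deriv
  have hev : f =ᶠ[𝓝[>] a] fun _ => k := eventually_of_mem (Ioo_mem_nhdsGT (hx.1.trans hx.2)) hk
  rw [hk x hx]
  exact tendsto_nhds_unique (tendsto_const_nhds.congr' hev.symm) hlim

lemma tendsto_log_mul_log_one_sub_nhdsGT_zero :
    Tendsto (fun s => log s * log (1 - s)) (𝓝[>] 0) (𝓝 0) := by
  have hslog : Tendsto (fun s => s * log s) (𝓝[>] 0) (𝓝 0) := by
    simpa using continuous_mul_log.continuousWithinAt.tendsto (x := 0) (s := Ioi 0)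
  have hslope : Tendsto (fun s => log (1 - s) / s) (𝓝[>] 0) (𝓝 (-1)) := by
    have hd : HasDerivAt (fun s => log (1 - s)) (-1) 0 := by
      simpa using ((hasDerivAt_id (0 : ℝ)).const_sub 1).log (by norm_num)
    refine ((hasDerivAt_iff_tendsto_slope.mp hd).mono_left
      (nhdsWithin_mono 0 fun s hs => ne_of_gt hs)).congr fun s => ?_
    simp [slope_def_field]
  have hprod := hslog.mul hslope
  rw [zero_mul] at hprod
  refine hprod.congr' ?_
  filter_upwards [self_mem_nhdsWithin] with s (hs : 0 < s)
  field_simp [hs.ne']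

lemma tendsto_rogersL_nhdsGT_zero : Tendsto rogersL (𝓝[>] 0) (𝓝 0) := by
  have h := tendsto_Li2_nhdsGT_zero.add (tendsto_log_mul_log_one_sub_nhdsGT_zero.const_mul (1 / 2))
  rw [mul_zero, add_zero] at h
  refine h.congr' ?_
  filter_upwards [Ioo_mem_nhdsGT one_pos] with s hs
  rw [rogersL_of_lt_one hs.2, mul_assoc]

lemma tendsto_rogersL_one_sub_nhdsGT_zero :
    Tendsto (fun s => rogersL (1 - s)) (𝓝[>] 0) (𝓝 (π ^ 2 / 6)) := by
  have hsub : Tendsto (fun s : ℝ => 1 - s) (𝓝[>] 0) (𝓝[Icc (-1) 1] 1) := by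
    refine tendsto_nhdsWithin_iff.mpr ⟨?_, ?_⟩
    · simpa using ((continuous_sub_left (1 : ℝ)).tendsto 0).mono_left nhdsWithin_le_nhds
    · filter_upwards [Ioo_mem_nhdsGT one_pos] with s hs
      constructor <;> linarith [hs.1, hs.2]
  have hLi2 := ((continuousOn_Li2 1 (by norm_num)).tendsto.comp hsub).add
    ((tendsto_log_mul_log_one_sub_nhdsGT_zero.const_mul (1 / 2)))
  rw [Li2_one, mul_zero, add_zero] at hLi2
  refine hLi2.congr' ?_
  filter_upwards [Ioo_mem_nhdsGT one_pos] with s hs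
  rw [Function.comp_apply, rogersL_of_lt_one (by linarith [hs.1]), sub_sub_cancel]
  ring

lemma rogersL_add_rogersL_one_sub {x : ℝ} (hx : x ∈ Ioo 0 1) :
    rogersL x + rogersL (1 - x) = π ^ 2 / 6 := by
  refine eqOn_of_hasDerivAt_zero_of_tendsto (f := fun s => rogersL s + rogersL (1 - s))
    (fun s hs => ?_)
    (by simpa using tendsto_rogersL_nhdsGT_zero.add tendsto_rogersL_one_sub_nhdsGT_zero) hx
  have hs' : 1 - s ∈ Ioo 0 1 := ⟨by linarith [hs.2], by linarith [hs.1]⟩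
  have h := (hasDerivAt_rogersL hs).add
    ((hasDerivAt_rogersL hs').comp s ((hasDerivAt_id s).const_sub 1))
  refine h.congr_deriv ?_
  rw [sub_sub_cancel]
  ring

lemma hasDerivAt_mul_one_sub_div_one_sub_mul {t z : ℝ} (hzt : 1 - z * t ≠ 0) :
    HasDerivAt (fun w => w * (1 - t) / (1 - w * t)) ((1 - t) / (1 - z * t) ^ 2) z := by
  refine ((hasDerivAt_mul_const (1 - t)).div ((hasDerivAt_mul_const t).const_sub 1)
    hzt).congr_deriv ?_
  field_simp
  ring

lemma hasDerivAt_one_sub_mul_div_one_sub_mul {t z : ℝ} (hzt : 1 - z * t ≠ 0) :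
    HasDerivAt (fun w => t * (1 - w) / (1 - w * t)) (-(t * (1 - t)) / (1 - z * t) ^ 2) z := by
  refine ((((hasDerivAt_id' z).const_sub 1).const_mul t).div
    ((hasDerivAt_mul_const t).const_sub 1) hzt).congr_deriv ?_
  field_simp
  ring

/-- Abel's identity `rogersL_add_rogersL_eq` says that this vanishes for `t, w ∈ (0, 1)`. -/
noncomputable def abelDefect (t w : ℝ) : ℝ :=
  rogersL w + rogersL t - rogersL (w * t) - rogersL (w * (1 - t) / (1 - w * t))
    - rogersL (t * (1 - w) / (1 - w * t))

lemma abel_args_mem_Ioo {t z : ℝ} (ht : t ∈ Ioo 0 1) (hz : z ∈ Ioo 0 1) :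
    z * t ∈ Ioo 0 1 ∧ z * (1 - t) / (1 - z * t) ∈ Ioo 0 1 ∧
      t * (1 - z) / (1 - z * t) ∈ Ioo 0 1 := by
  obtain ⟨hz0, hz1⟩ := hz
  obtain ⟨ht0, ht1⟩ := ht
  have hzt : 0 < 1 - z * t := by nlinarith
  refine ⟨⟨by positivity, by nlinarith⟩, ⟨by apply div_pos <;> nlinarith, ?_⟩,
    ⟨by apply div_pos <;> nlinarith, ?_⟩⟩ <;> rw [div_lt_one hzt] <;> nlinarith

lemma hasDerivAt_abelDefect {t z : ℝ} (ht : t ∈ Ioo 0 1) (hz : z ∈ Ioo 0 1) :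
    HasDerivAt (abelDefect t) 0 z := by
  obtain ⟨hprod, hα, hβ⟩ := abel_args_mem_Ioo ht hz
  obtain ⟨hz0, hz1⟩ := hz
  obtain ⟨ht0, ht1⟩ := ht
  have hzt : 1 - z * t ≠ 0 := (sub_pos.mpr hprod.2).ne'
  have hz1' : 1 - z ≠ 0 := (sub_pos.mpr hz1).ne'
  have ht1' : 1 - t ≠ 0 := (sub_pos.mpr ht1).ne'
  have h := ((((hasDerivAt_rogersL ⟨hz0, hz1⟩).add_const (rogersL t)).sub
    ((hasDerivAt_rogersL hprod).comp z (hasDerivAt_mul_const t))).sub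
    ((hasDerivAt_rogersL hα).comp z (hasDerivAt_mul_one_sub_div_one_sub_mul hzt))).sub
    ((hasDerivAt_rogersL hβ).comp z (hasDerivAt_one_sub_mul_div_one_sub_mul hzt))
  refine h.congr_deriv ?_
  have e1 : 1 - z * (1 - t) / (1 - z * t) = (1 - z) / (1 - z * t) := by field_simp; ring
  have e2 : 1 - t * (1 - z) / (1 - z * t) = (1 - t) / (1 - z * t) := by
    rw [eq_div_iff hzt, sub_mul, div_mul_cancel₀ _ hzt]
    ring
  have l1 : log (z * (1 - t) / (1 - z * t)) = log z + log (1 - t) - log (1 - z * t) := by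
    rw [log_div (by positivity) hzt, log_mul hz0.ne' ht1']
  have l2 : log (t * (1 - z) / (1 - z * t)) = log t + log (1 - z) - log (1 - z * t) := by
    rw [log_div (by positivity) hzt, log_mul ht0.ne' hz1']
  rw [e1, e2, l1, l2, log_mul hz0.ne' ht0.ne', log_div hz1' hzt, log_div ht1' hzt]
  field_simp
  ring

lemma tendsto_abelDefect_nhdsGT_zero {t : ℝ} (ht : t ∈ Ioo 0 1) :
    Tendsto (abelDefect t) (𝓝[>] 0) (𝓝 0) := by
  have hα : ContinuousAt (fun w => w * (1 - t) / (1 - w * t)) 0 := by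
    fun_prop (disch := simp)
  have hβ : Tendsto (fun w => t * (1 - w) / (1 - w * t)) (𝓝 0) (𝓝 t) := by
    have h : ContinuousAt (fun w => t * (1 - w) / (1 - w * t)) 0 := by fun_prop (disch := simp)
    simpa using h.tendsto
  have to_zero : ∀ f : ℝ → ℝ, ContinuousAt f 0 → f 0 = 0 → (∀ w ∈ Ioo 0 1, 0 < f w) →
      Tendsto (fun w => rogersL (f w)) (𝓝[>] 0) (𝓝 0) := fun f hf hf0 hpos =>
    tendsto_rogersL_nhdsGT_zero.comp <| tendsto_nhdsWithin_iff.mpr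
      ⟨(hf0 ▸ hf.tendsto).mono_left nhdsWithin_le_nhds,
        eventually_of_mem (Ioo_mem_nhdsGT one_pos) hpos⟩
  have hL := (((tendsto_rogersL_nhdsGT_zero.add_const (rogersL t)).sub
    (to_zero _ (by fun_prop) (zero_mul t) fun w hw => (abel_args_mem_Ioo ht hw).1.1)).sub
    (to_zero _ hα (by simp) fun w hw => (abel_args_mem_Ioo ht hw).2.1.1)).sub
    (((hasDerivAt_rogersL ht).continuousAt.tendsto.comp hβ).mono_left nhdsWithin_le_nhds)
  rwa [zero_add, sub_zero, sub_zero, sub_self] at hL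

lemma rogersL_add_rogersL_eq {s t : ℝ} (hs : s ∈ Ioo 0 1) (ht : t ∈ Ioo 0 1) :
    rogersL s + rogersL t =
      rogersL (s * t) + rogersL (s * (1 - t) / (1 - s * t))
        + rogersL (t * (1 - s) / (1 - s * t)) := by
  have h := eqOn_of_hasDerivAt_zero_of_tendsto (fun z hz => hasDerivAt_abelDefect ht hz)
    (tendsto_abelDefect_nhdsGT_zero ht) hs
  simp only [abelDefect] at h
  linarith

lemma rogersL_add_rogersL_one_div {x : ℝ} (hx : 0 < x) (hx1 : x ≠ 1) :
    rogersL x + rogersL (1 / x) = π ^ 2 / 3 := by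
  rcases hx1.lt_or_gt with hx1 | hx1
  · rw [rogersL_of_one_lt ((one_lt_div hx).mpr hx1), one_div_one_div]
    ring
  · rw [rogersL_of_one_lt hx1]
    ring

lemma rogersL_five_term_of_lt {u v : ℝ} (hu : u ∈ Ioo 0 1) (hv : v ∈ Ioo 0 1) (hvu : v < u) :
    rogersL u - rogersL v + rogersL (v / u) - rogersL ((1 - v) / (1 - u))
      + rogersL (u * (1 - v) / (v * (1 - u))) = π ^ 2 / 6 := by
  obtain ⟨hu0, hu1⟩ := hu
  obtain ⟨hv0, hv1⟩ := hv
  have hv1' : 0 < 1 - v := sub_pos.mpr hv1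
  have habel := rogersL_add_rogersL_eq ⟨hu0, hu1⟩ ⟨div_pos hv0 hu0, (div_lt_one hu0).mpr hvu⟩
  have e1 : u * (v / u) = v := by field_simp
  have e2 : u * (1 - v / u) / (1 - v) = 1 - (1 - u) / (1 - v) := by field_simp; ring
  have e3 : v / u * (1 - u) / (1 - v) = 1 / (u * (1 - v) / (v * (1 - u))) := by field_simp
  rw [e1, e2, e3] at habel
  have hrefl := rogersL_add_rogersL_one_sub (x := (1 - u) / (1 - v))
    ⟨by apply div_pos <;> linarith, by rw [div_lt_one hv1']; linarith⟩
  have hinv₁ := rogersL_add_rogersL_one_div (x := (1 - v) / (1 - u))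
    (by apply div_pos <;> linarith) (by rw [Ne, div_eq_one_iff_eq (by linarith)]; linarith)
  have hinv₂ := rogersL_add_rogersL_one_div (x := u * (1 - v) / (v * (1 - u))) (by positivity)
    (by rw [Ne, div_eq_one_iff_eq (by positivity)]; nlinarith)
  rw [one_div_div] at hinv₁
  linarith

lemma rogersL_five_term {u v : ℝ} (hu : u ∈ Ioo 0 1) (hv : v ∈ Ioo 0 1) (huv : u ≠ v) :
    rogersL u - rogersL v + rogersL (v / u) - rogersL ((1 - v) / (1 - u))
      + rogersL (u * (1 - v) / (v * (1 - u))) = π ^ 2 / 6 := by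
  rcases huv.lt_or_gt with huv | huv
  · have h := rogersL_five_term_of_lt hv hu huv
    obtain ⟨hu0, hu1⟩ := hu
    obtain ⟨hv0, hv1⟩ := hv
    have hinv₁ := rogersL_add_rogersL_one_div (x := v / u) (by positivity)
      (by rw [Ne, div_eq_one_iff_eq hu0.ne']; exact huv.ne')
    have hinv₂ := rogersL_add_rogersL_one_div (x := (1 - v) / (1 - u))
      (by apply div_pos <;> linarith) (by rw [Ne, div_eq_one_iff_eq (by linarith)]; linarith)
    have hinv₃ := rogersL_add_rogersL_one_div (x := u * (1 - v) / (v * (1 - u))) (by positivity)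
      (by rw [Ne, div_eq_one_iff_eq (by positivity)]; nlinarith)
    rw [one_div_div] at hinv₁ hinv₂ hinv₃
    linarith
  · exact rogersL_five_term_of_lt hu hv huv

/-- For `u = (x + p) / (x + q)` one has `1 - u = (q - p) / (x + q)`, so the five arguments of the
relation become ratios of the linear forms `x + p`, `x + q`, `y + p`, `y + q`. -/
lemma rogersL_five_term_of_ratio {p q x y : ℝ} (hpq : p < q) (hx : 0 < x + p) (hy : 0 < y + p)
    (hxy : x ≠ y) :
    rogersL ((x + p) / (x + q)) - rogersL ((y + p) / (y + q))
      + rogersL ((y + p) * (x + q) / ((y + q) * (x + p)))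
      - rogersL ((x + q) / (y + q)) + rogersL ((x + p) / (y + p)) = π ^ 2 / 6 := by
  have hxq : 0 < x + q := by linarith
  have hyq : 0 < y + q := by linarith
  have hqp : q - p ≠ 0 := (sub_pos.mpr hpq).ne'
  have mem : ∀ z, 0 < z + p → (z + p) / (z + q) ∈ Ioo 0 1 := fun z hz =>
    ⟨div_pos hz (by linarith), (div_lt_one (by linarith)).mpr (by linarith)⟩
  have one_sub : ∀ z, 0 < z + p → 1 - (z + p) / (z + q) = (q - p) / (z + q) := fun z hz => by
    field_simp [(show 0 < z + q by linarith).ne']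
    ring
  have hne : (x + p) / (x + q) ≠ (y + p) / (y + q) := by
    rw [Ne, div_eq_div_iff hxq.ne' hyq.ne']
    intro h
    exact hxy (mul_left_cancel₀ hqp (by linear_combination h))
  have h := rogersL_five_term (mem x hx) (mem y hy) hne
  rw [one_sub x hx, one_sub y hy] at h
  convert h using 3 <;> field_simp

theorem five_term_chain_step_general (l a b c d : ℤ) (hl : 0 < l)
    (ha : 0 < a) (hb : 0 < b) (hc : 0 ≤ c)
    (hdet : a * d - b * c = l)
    (x y : ℝ) (hx : 0 < x) (hy : 0 < y) (hxy : x ≠ y) :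
    ∃ k : ℤ,
      rogersL ((x + c / a) / (x + d / b)) - rogersL ((y + c / a) / (y + d / b))
        + rogersL (((a * y + c) * (b * x + d)) / ((b * y + d) * (a * x + c)))
        - (rogersL ((b * x + d) / (b * y + d)) - rogersL ((a * x + c) / (a * y + c)))
      = k * (Real.pi ^ 2 / 6) := by
  have ha' : (0 : ℝ) < a := Int.cast_pos.mpr ha
  have hb' : (0 : ℝ) < b := Int.cast_pos.mpr hb
  have hc' : (0 : ℝ) ≤ c / a := div_nonneg (by exact_mod_cast hc) ha'.le
  have hpq : (c : ℝ) / a < d / b := by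
    rw [div_lt_div_iff₀ ha' hb']
    have : (0 : ℝ) < a * d - b * c := by exact_mod_cast hdet ▸ hl
    linarith
  have h := rogersL_five_term_of_ratio hpq (by linarith) (by linarith) hxy
  have e3 : ((a * y + c) * (b * x + d)) / ((b * y + d) * (a * x + c)) =
      (y + c / a) * (x + d / b) / ((y + d / b) * (x + c / a)) := by
    field_simp
  have e4 : (b * x + d) / (b * y + d) = (x + d / b) / (y + d / b) := by field_simp
  have e5 : (a * x + c) / (a * y + c) = (x + c / a) / (y + c / a) := by field_simp
  refine ⟨1, ?_⟩
  rw [e3, e4, e5, Int.cast_one, one_mul, ← h]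
  ring

theorem five_term_chain_step (l a b c d : ℤ) (hl : 0 < l)
    (ha : 0 < a) (hb : 0 < b) (hd : 0 < d) (hc : 0 ≤ c)
    (hdet : a * d - b * c = l)
    (x y : ℝ) (hx : 0 < x) (hy : 0 < y) (hxy : x ≠ y)
    (h1 : 0 < (x + c / a) / (x + d / b)) (h1' : (x + c / a) / (x + d / b) ≠ 1)
    (h2 : 0 < (y + c / a) / (y + d / b)) (h2' : (y + c / a) / (y + d / b) ≠ 1)
    (h3 : 0 < ((a * y + c) * (b * x + d)) / ((b * y + d) * (a * x + c)))
    (h3' : ((a * y + c) * (b * x + d)) / ((b * y + d) * (a * x + c)) ≠ 1)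
    (h4 : 0 < (b * x + d) / (b * y + d)) (h4' : (b * x + d) / (b * y + d) ≠ 1)
    (h5 : 0 < (a * x + c) / (a * y + c)) (h5' : (a * x + c) / (a * y + c) ≠ 1) :
    ∃ k : ℤ,
      rogersL ((x + c / a) / (x + d / b)) - rogersL ((y + c / a) / (y + d / b))
        + rogersL (((a * y + c) * (b * x + d)) / ((b * y + d) * (a * x + c)))
        - (rogersL ((b * x + d) / (b * y + d)) - rogersL ((a * x + c) / (a * y + c)))
      = k * (Real.pi ^ 2 / 6) :=
  five_term_chain_step_general l a b c d hl ha hb hc hdet x y hx hy hxy
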